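/- arXiv:2401.16124 — 3 statements merged into one kernel-verified Lean document; each statement's English description precedes it below -/
import Mathlib

section
/- If a nogood δ is a resolvent of a set of nogoods Δ, and every nogood in the shifted set Δ↑t (obtained by shifting every literal of every nogood in Δ by t time steps) is considered, then the shifted nogood δ↑t is a resolvent of Δ↑t. -/
/-- The complement of a signed literal `(b, a)` flips the sign. -/
def complLit {α : Type*} (σ : Bool × α) : Bool × α := (!σ.1, σ.2)

/-- `δ` is a resolvent of the set of nogoods `Δ`: it belongs to `Δ` or is obtained
by finitely many binary resolution steps from nogoods of `Δ`. -/
inductive Resolvent {α : Type*} [DecidableEq α] (Δ : Set (Finset (Bool × α))) :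
    Finset (Bool × α) → Prop
  | base {δ : Finset (Bool × α)} (h : δ ∈ Δ) : Resolvent Δ δ
  | res {δ₁ δ₂ : Finset (Bool × α)} (σ : Bool × α) :
      Resolvent Δ δ₁ → Resolvent Δ δ₂ →
      Resolvent Δ (δ₁.erase σ ∪ δ₂.erase (complLit σ))

/-- Shift a nogood over time-stamped atoms by `t` time steps. -/
def shiftNg {β : Type*} [DecidableEq β] (δ : Finset (Bool × (β × ℤ))) (t : ℤ) :
    Finset (Bool × (β × ℤ)) :=
  δ.image fun p => (p.1, (p.2.1, p.2.2 + t))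

/-- If `δ` is a resolvent of `Δ`, then the shifted nogood `δ↑t` is a resolvent of
the pointwise shifted set `Δ↑t`. -/
theorem shift_resolvent {β : Type*} [DecidableEq β]
    (Δ : Set (Finset (Bool × (β × ℤ)))) (δ : Finset (Bool × (β × ℤ))) (t : ℤ)
    (h : Resolvent Δ δ) :
    Resolvent ((fun ν => shiftNg ν t) '' Δ) (shiftNg δ t) := by
  have hinj : Function.Injective
      (fun p : Bool × (β × ℤ) => (p.1, (p.2.1, p.2.2 + t))) := by
    rintro ⟨b, a, i⟩ ⟨b', a', i'⟩ h
    simp only [Prod.mk.injEq] at h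
    obtain ⟨hb, ha, hi⟩ := h; subst hb ha
    have : i = i' := by omega
    rw [this]
  induction h with
  | base h => exact Resolvent.base ⟨_, h, rfl⟩
  | @res δ₁ δ₂ σ h1 h2 ih1 ih2 =>
    have key : shiftNg (δ₁.erase σ ∪ δ₂.erase (complLit σ)) t =
        (shiftNg δ₁ t).erase ((fun p : Bool × (β × ℤ) => (p.1, (p.2.1, p.2.2 + t))) σ) ∪
        (shiftNg δ₂ t).erase (complLit ((fun p : Bool × (β × ℤ) => (p.1, (p.2.1, p.2.2 + t))) σ)) := by
      simp only [shiftNg, Finset.image_union, Finset.erase_eq,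
        Finset.image_sdiff _ _ hinj, Finset.image_singleton, complLit]
    rw [key]
    exact Resolvent.res _ ih1 ih2
end

section
/- A directed graph G has the property that every vertex with an incoming or outgoing edge is internal (has both) if and only if: every vertex with an outgoing edge is loop-reachable and every vertex with an incoming edge has an outgoing edge. -/
/-- A finite directed graph has every vertex with an incoming or outgoing edge
internal (having both) if and only if every vertex with an outgoing edge is
loop-reachable and every vertex with an incoming edge has an outgoing edge. -/
theorem internal_iff_loopReachable {V : Type*} [Fintype V] (E : V → V → Prop) :
    (∀ v : V, ((∃ u, E u v) ∨ (∃ w, E v w)) → ((∃ u, E u v) ∧ (∃ w, E v w)))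
    ↔
    ((∀ v : V, (∃ w, E v w) →
        ∃ w, Relation.TransGen E w w ∧ Relation.ReflTransGen E w v) ∧
     (∀ v : V, (∃ u, E u v) → ∃ w, E v w)) := by
  classical
  constructor
  · intro h
    refine ⟨?_, fun v hv => (h v (Or.inl hv)).2⟩
    intro v hv
    have hv' : ∃ u, E u v := (h v (Or.inr hv)).1
    have hin : ∀ x : {x : V // ∃ u, E u x}, ∃ u : V, E u x.1 ∧ ∃ u', E u' u := by
      rintro ⟨x, u, hu⟩
      exact ⟨u, hu, (h u (Or.inr ⟨x, hu⟩)).1⟩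
    set S := {x : V // ∃ u, E u x}
    let g : S → S := fun x => ⟨(hin x).choose, (hin x).choose_spec.2⟩
    have hstep : ∀ x : S, E (g x).1 x.1 := fun x => (hin x).choose_spec.1
    let x0 : S := ⟨v, hv'⟩
    have hpath : ∀ n : ℕ, Relation.ReflTransGen E (g^[n] x0).1 v := by
      intro n
      induction n with
      | zero => exact Relation.ReflTransGen.refl
      | succ n ih =>
        rw [Function.iterate_succ_apply']
        exact Relation.ReflTransGen.head (hstep _) ih
    have hchain : ∀ m k : ℕ,
        Relation.TransGen E (g^[m + k + 1] x0).1 (g^[m] x0).1 := by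
      intro m k
      induction k with
      | zero =>
        rw [Function.iterate_succ_apply']
        exact Relation.TransGen.single (hstep _)
      | succ k ih =>
        have hmk : m + (k + 1) + 1 = (m + k + 1) + 1 := by ring
        rw [hmk, Function.iterate_succ_apply']
        exact Relation.TransGen.head (hstep _) ih
    obtain ⟨a, b, hab, heq⟩ :=
      Finite.exists_ne_map_eq_of_infinite (fun n : ℕ => (g^[n] x0).1)
    rcases lt_or_gt_of_ne hab with hlt | hlt
    · obtain ⟨k, rfl⟩ : ∃ k, b = a + k + 1 := ⟨b - a - 1, by omega⟩
      refine ⟨(g^[a] x0).1, ?_, hpath a⟩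
      have := hchain a k
      rwa [← heq] at this
    · obtain ⟨k, rfl⟩ : ∃ k, a = b + k + 1 := ⟨a - b - 1, by omega⟩
      refine ⟨(g^[b] x0).1, ?_, hpath b⟩
      have := hchain b k
      rwa [heq] at this
  · rintro ⟨h1, h2⟩ v hv
    rcases hv with hv | hv
    · exact ⟨hv, h2 v hv⟩
    · refine ⟨?_, hv⟩
      obtain ⟨w, hww, hwv⟩ := h1 v hv
      rcases hwv.cases_tail with rfl | ⟨c, _, hcv⟩
      · obtain ⟨b, _, hbv⟩ := Relation.TransGen.tail'_iff.mp hww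
        exact ⟨b, hbv⟩
      · exact ⟨c, hcv⟩
end

section
/- Splitting a layered nogood set: let Ψ be a set of 'temporal' nogoods each of whose literals has time offset 0 or −1 (relative to its instantiation point), and let Ψ[i..j] = ⋃_{k∈[i,j]} Ψ[k] where Ψ[k] instantiates offsets relative to k. If δ is a resolvent of Ψ[1..n], then there exist i, j with 1 ≤ i ≤ j ≤ n such that δ is a resolvent of Ψ[i..j] and the step indices of δ are contained in [i−1, j]. -/
/-- Instantiation of a temporal nogood at step `k`: an atom `a` (second component
`false`) gets step `k`, a primed atom `a'` (second component `true`) gets step `k-1`. -/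
def instNg {β : Type*} [DecidableEq β] (k : ℤ) (ν : Finset (Bool × (β × Bool))) :
    Finset (Bool × (β × ℤ)) :=
  ν.image fun p => (p.1, (p.2.1, if p.2.2 then k - 1 else k))

/-- `layer Ψ i j = Ψ[i..j]`: all instantiations of nogoods of `Ψ` at steps in `[i,j]`. -/
def layer {β : Type*} [DecidableEq β] (Ψ : Set (Finset (Bool × (β × Bool))))
    (i j : ℤ) : Set (Finset (Bool × (β × ℤ))) :=
  {δ | ∃ k : ℤ, i ≤ k ∧ k ≤ j ∧ ∃ ν ∈ Ψ, δ = instNg k ν}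

theorem Resolvent.mono {α : Type*} [DecidableEq α] {Δ Δ' : Set (Finset (Bool × α))}
    (hs : Δ ⊆ Δ') {δ : Finset (Bool × α)} (h : Resolvent Δ δ) : Resolvent Δ' δ := by
  induction h with
  | base h => exact .base (hs h)
  | res σ _ _ ih1 ih2 => exact .res σ ih1 ih2

theorem layer_mono {β : Type*} [DecidableEq β] (Ψ : Set (Finset (Bool × (β × Bool))))
    {i j i' j' : ℤ} (hi : i' ≤ i) (hj : j ≤ j') : layer Ψ i j ⊆ layer Ψ i' j' := by
  rintro δ ⟨k, hk1, hk2, ν, hν, rfl⟩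
  exact ⟨k, hi.trans hk1, hk2.trans hj, ν, hν, rfl⟩

/-- Splitting a layered nogood set: any resolvent of `Ψ[1..n]` is a resolvent of
some `Ψ[i..j]` with `1 ≤ i ≤ j ≤ n`, and its step indices lie in `[i-1, j]`. -/
theorem layered_resolvent_split {β : Type*} [DecidableEq β]
    (Ψ : Set (Finset (Bool × (β × Bool)))) (n : ℤ)
    (δ : Finset (Bool × (β × ℤ))) (h : Resolvent (layer Ψ 1 n) δ) :
    ∃ i j : ℤ, 1 ≤ i ∧ i ≤ j ∧ j ≤ n ∧ Resolvent (layer Ψ i j) δ ∧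
      ∀ p ∈ δ, i - 1 ≤ p.2.2 ∧ p.2.2 ≤ j := by
  induction h with
  | @base δ h =>
    obtain ⟨k, hk1, hk2, ν, hν, rfl⟩ := h
    refine ⟨k, k, hk1, le_refl _, hk2, .base ⟨k, le_refl _, le_refl _, ν, hν, rfl⟩, ?_⟩
    intro p hp
    simp only [instNg, Finset.mem_image] at hp
    obtain ⟨q, _, rfl⟩ := hp
    constructor <;> dsimp only <;> split
    all_goals norm_num
  | @res δ₁ δ₂ σ h1 h2 ih1 ih2 =>
    obtain ⟨i₁, j₁, hi₁, hij₁, hj₁, hr₁, hb₁⟩ := ih1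
    obtain ⟨i₂, j₂, hi₂, hij₂, hj₂, hr₂, hb₂⟩ := ih2
    refine ⟨min i₁ i₂, max j₁ j₂, le_min hi₁ hi₂, le_trans (min_le_left _ _) (hij₁.trans (le_max_left _ _)), max_le hj₁ hj₂, ?_, ?_⟩
    · exact .res σ (hr₁.mono (layer_mono Ψ (min_le_left _ _) (le_max_left _ _)))
        (hr₂.mono (layer_mono Ψ (min_le_right _ _) (le_max_right _ _)))
    · intro p hp
      rcases Finset.mem_union.mp hp with hp | hp
      · have := hb₁ p (Finset.mem_of_mem_erase hp); omega
      · have := hb₂ p (Finset.mem_of_mem_erase hp); omega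
end
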